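/- Let n, k, r be integers with k, r ≥ 2 and n ≥ 2k, and write n = pk + q with p, q integers and 1 ≤ q ≤ k. The r-uniform hypergraph H_U(n; k, r) = ((p − 1)K_k^r ∪ K_q^r) ∨_r (K_k^r)^c is vertex-k-maximal. -/

import Mathlib

/-- A finite hypergraph: a finite vertex set together with a finite set of
non-empty edges, each a subset of the vertex set. -/
structure NatHypergraph where
  verts : Finset ℕ
  edges : Finset (Finset ℕ)
  edge_sub : ∀ e ∈ edges, e ⊆ verts
  edge_nonempty : ∀ e ∈ edges, e.Nonempty

namespace NatHypergraph

/-- `H` is `r`-uniform if every edge has cardinality `r`. -/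
def IsUniform (H : NatHypergraph) (r : ℕ) : Prop := ∀ e ∈ H.edges, e.card = r

/-- `H'` is a subhypergraph of `H`. -/
def IsSub (H' H : NatHypergraph) : Prop := H'.verts ⊆ H.verts ∧ H'.edges ⊆ H.edges

/-- Two vertices are adjacent if some edge contains both. -/
def Adj (H : NatHypergraph) (u v : ℕ) : Prop := ∃ e ∈ H.edges, u ∈ e ∧ v ∈ e

/-- `H` is connected if every pair of vertices is joined by a path
(equivalently, a walk, i.e. is reachable via the adjacency relation). -/
def Connected (H : NatHypergraph) : Prop :=
  ∀ u ∈ H.verts, ∀ v ∈ H.verts, Relation.ReflTransGen H.Adj u v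

/-- The subhypergraph of `H` induced by the vertex set `Y`. -/
def induce (H : NatHypergraph) (Y : Finset ℕ) : NatHypergraph where
  verts := H.verts ∩ Y
  edges := H.edges.filter (fun e => e ⊆ Y)
  edge_sub := by
    intro e he
    simp only [Finset.mem_filter] at he
    exact Finset.subset_inter (H.edge_sub e he.1) he.2
  edge_nonempty := by
    intro e he
    simp only [Finset.mem_filter] at he
    exact H.edge_nonempty e he.1

/-- `X` is a vertex-cut of `H` if deleting `X` leaves a disconnected hypergraph. -/
def IsVertexCut (H : NatHypergraph) (X : Finset ℕ) : Prop :=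
  X ⊆ H.verts ∧ ¬ (H.induce (H.verts \ X)).Connected

open Classical in
/-- The vertex-connectivity of `H`: the minimum cardinality of a vertex-cut if one
exists, and `|V(H)| - 1` otherwise. -/
noncomputable def kappa (H : NatHypergraph) : ℕ :=
  if ∃ X, H.IsVertexCut X then sInf {m | ∃ X, H.IsVertexCut X ∧ X.card = m}
  else H.verts.card - 1

/-- `κ̄(H)`: the maximum vertex-connectivity over all subhypergraphs of `H`. -/
noncomputable def kappaBar (H : NatHypergraph) : ℕ :=
  sSup {m | ∃ H' : NatHypergraph, H'.IsSub H ∧ H'.kappa = m}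

/-- `H + e`: add the edge `e` (a non-empty subset of the vertices) to `H`. -/
def addEdge (H : NatHypergraph) (e : Finset ℕ) : NatHypergraph where
  verts := H.verts
  edges := if e ⊆ H.verts ∧ e.Nonempty then insert e H.edges else H.edges
  edge_sub := by
    intro f hf
    split at hf
    · rcases Finset.mem_insert.mp hf with rfl | hf
      · exact (by assumption : f ⊆ H.verts ∧ f.Nonempty).1
      · exact H.edge_sub f hf
    · exact H.edge_sub f hf
  edge_nonempty := by
    intro f hf
    split at hf
    · rcases Finset.mem_insert.mp hf with rfl | hf
      · exact (by assumption : f ⊆ H.verts ∧ f.Nonempty).2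
      · exact H.edge_nonempty f hf
    · exact H.edge_nonempty f hf

/-- `H + F`: add a set `F` of edges to `H`. -/
def addEdges (H : NatHypergraph) (F : Finset (Finset ℕ)) : NatHypergraph where
  verts := H.verts
  edges := H.edges ∪ F.filter (fun e => e ⊆ H.verts ∧ e.Nonempty)
  edge_sub := by
    intro f hf
    rcases Finset.mem_union.mp hf with hf | hf
    · exact H.edge_sub f hf
    · exact (Finset.mem_filter.mp hf).2.1
  edge_nonempty := by
    intro f hf
    rcases Finset.mem_union.mp hf with hf | hf
    · exact H.edge_nonempty f hf
    · exact (Finset.mem_filter.mp hf).2.2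

/-- `H` is vertex-`k`-maximal (as an `r`-uniform hypergraph): `κ̄(H) ≤ k`, but adding
any edge of the complement `H^c` creates a subhypergraph of connectivity at least `k + 1`. -/
def VertexKMaximal (H : NatHypergraph) (r k : ℕ) : Prop :=
  H.IsUniform r ∧ H.kappaBar ≤ k ∧
    ∀ e : Finset ℕ, e ⊆ H.verts → e.card = r → e ∉ H.edges →
      k + 1 ≤ (H.addEdge e).kappaBar

/-- The complete `r`-uniform hypergraph on the vertex set `V`. -/
def completeHG (V : Finset ℕ) (r : ℕ) : NatHypergraph where
  verts := V
  edges := (V.powersetCard r).filter (fun e => e.Nonempty)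
  edge_sub := by
    intro e he
    simp only [Finset.mem_filter, Finset.mem_powersetCard] at he
    exact he.1.1
  edge_nonempty := by
    intro e he
    exact (Finset.mem_filter.mp he).2

/-- The hypergraph on vertex set `V` with no edges. -/
def emptyHG (V : Finset ℕ) : NatHypergraph where
  verts := V
  edges := ∅
  edge_sub := by simp
  edge_nonempty := by simp

/-- The `r`-join `H₁ ∨_r H₂`: the union of `H₁` and `H₂` together with all
`r`-element subsets of `V(H₁) ∪ V(H₂)` meeting both `V(H₁)` and `V(H₂)`. -/
def rJoin (H1 H2 : NatHypergraph) (r : ℕ) : NatHypergraph where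
  verts := H1.verts ∪ H2.verts
  edges := H1.edges ∪ H2.edges ∪
    ((H1.verts ∪ H2.verts).powersetCard r).filter
      (fun e => (e ∩ H1.verts).Nonempty ∧ (e ∩ H2.verts).Nonempty)
  edge_sub := by
    intro e he
    rcases Finset.mem_union.mp he with he | he
    · rcases Finset.mem_union.mp he with he | he
      · exact (H1.edge_sub e he).trans Finset.subset_union_left
      · exact (H2.edge_sub e he).trans Finset.subset_union_right
    · exact (Finset.mem_powersetCard.mp (Finset.mem_filter.mp he).1).1
  edge_nonempty := by
    intro e he
    rcases Finset.mem_union.mp he with he | he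
    · rcases Finset.mem_union.mp he with he | he
      · exact H1.edge_nonempty e he
      · exact H2.edge_nonempty e he
    · obtain ⟨x, hx⟩ := (Finset.mem_filter.mp he).2.1
      exact ⟨x, (Finset.mem_inter.mp hx).1⟩

/-- The union of two hypergraphs. -/
def hUnion (H1 H2 : NatHypergraph) : NatHypergraph where
  verts := H1.verts ∪ H2.verts
  edges := H1.edges ∪ H2.edges
  edge_sub := by
    intro e he
    rcases Finset.mem_union.mp he with he | he
    · exact (H1.edge_sub e he).trans Finset.subset_union_left
    · exact (H2.edge_sub e he).trans Finset.subset_union_right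
  edge_nonempty := by
    intro e he
    rcases Finset.mem_union.mp he with he | he
    · exact H1.edge_nonempty e he
    · exact H2.edge_nonempty e he

/-- The union of the hypergraphs `f 0, …, f (m-1)`. -/
def unionOver (m : ℕ) (f : ℕ → NatHypergraph) : NatHypergraph where
  verts := (Finset.range m).biUnion (fun i => (f i).verts)
  edges := (Finset.range m).biUnion (fun i => (f i).edges)
  edge_sub := by
    intro e he
    obtain ⟨i, hi, hei⟩ := Finset.mem_biUnion.mp he
    exact ((f i).edge_sub e hei).trans (Finset.subset_biUnion_of_mem (fun i => (f i).verts) hi)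
  edge_nonempty := by
    intro e he
    obtain ⟨i, _, hei⟩ := Finset.mem_biUnion.mp he
    exact (f i).edge_nonempty e hei

/-- `C` is a component of `G`: a maximal connected subhypergraph. -/
def IsComponent (G C : NatHypergraph) : Prop :=
  C.IsSub G ∧ C.Connected ∧
    ∀ C' : NatHypergraph, C'.IsSub G → C'.Connected → C.IsSub C' → C' = C

/-- `(S, H₁, H₂)` is a separation triple of `H`: `S` is a minimum vertex-cut,
`H₁ = H[S ∪ V(C₁)]` and `H₂ = H[S ∪ V(C₂)]`, where `C₁` is a component of `H - S`
and `C₂ = H - (S ∪ V(C₁))`. -/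
def IsSeparationTriple (H : NatHypergraph) (S : Finset ℕ) (H1 H2 : NatHypergraph) : Prop :=
  H.IsVertexCut S ∧ (∀ X : Finset ℕ, H.IsVertexCut X → S.card ≤ X.card) ∧
    ∃ C1 : NatHypergraph, IsComponent (H.induce (H.verts \ S)) C1 ∧
      H1 = H.induce (S ∪ C1.verts) ∧
      H2 = H.induce (S ∪ (H.verts \ (S ∪ C1.verts)))

end NatHypergraph

/-!
Every subhypergraph `H'` of `H_U` has a cut of at most `k` vertices. If the vertices of `H'` on
the clique side lie in a single clique, they form such a cut, because what remains lies on the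
edgeless side `C`. Otherwise the vertices of `H'` in `C` form a cut, because no edge inside the
clique side meets two different cliques.

Conversely, a new `r`-edge `e` lies either inside `C` or inside the clique side. In each case,
some window of at least `k + r` vertices stays connected after any `k` of its vertices are
deleted. The window is a `k`-clique together with `e`, or `e` together with `C`, or a `k`-clique
that meets `e` together with `e` and `C`. What remains after the deletion either meets both
sides, and the crossing edges hold it together, or it is a clique, the edge `e`, or a clique
glued to `e`.
-/

namespace NatHypergraph

open Finset Relation

section

variable {H H' : NatHypergraph} {W X Y Z e : Finset ℕ} {k r : ℕ}

theorem ext {H₁ H₂ : NatHypergraph} (hv : H₁.verts = H₂.verts) (he : H₁.edges = H₂.edges) :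
    H₁ = H₂ := by
  cases H₁; cases H₂; simp_all

theorem mem_induce_edges : e ∈ (H.induce Y).edges ↔ e ∈ H.edges ∧ e ⊆ Y := mem_filter

theorem mem_induce_verts {v : ℕ} : v ∈ (H.induce Y).verts ↔ v ∈ H.verts ∧ v ∈ Y := mem_inter

theorem induce_verts_of_subset (hY : Y ⊆ H.verts) : (H.induce Y).verts = Y :=
  inter_eq_right.mpr hY

theorem induce_induce (h : Z ⊆ Y) : (H.induce Y).induce Z = H.induce Z := by
  refine ext ?_ ?_
  · simp only [induce, inter_assoc, inter_eq_right.mpr h]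
  · ext f
    simp only [mem_induce_edges, and_assoc]
    exact and_congr_right fun _ => ⟨fun h' => h'.2, fun h' => ⟨h'.trans h, h'⟩⟩

theorem induce_isSub (H : NatHypergraph) (Y : Finset ℕ) : (H.induce Y).IsSub H :=
  ⟨inter_subset_left, filter_subset _ _⟩

theorem isSub_addEdge (H : NatHypergraph) (e : Finset ℕ) : H.IsSub (H.addEdge e) := by
  refine ⟨subset_rfl, fun f hf => ?_⟩
  simp only [addEdge]
  split_ifs
  exacts [mem_insert_of_mem hf, hf]

theorem mem_addEdge_edges_self (he : e ⊆ H.verts) (hne : e.Nonempty) :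
    e ∈ (H.addEdge e).edges := by
  simp [addEdge, he, hne]

instance (H : NatHypergraph) : Std.Symm H.Adj :=
  ⟨fun _ _ ⟨e, he, hu, hv⟩ => ⟨e, he, hv, hu⟩⟩

theorem adj_induce_mono (hYZ : Y ⊆ Z) : (H.induce Y).Adj ≤ (H.induce Z).Adj := by
  rintro u v ⟨f, hf, hu, hv⟩
  rw [mem_induce_edges] at hf
  exact ⟨f, mem_induce_edges.mpr ⟨hf.1, hf.2.trans hYZ⟩, hu, hv⟩

theorem connected_of_forall_reflTransGen {t : ℕ}
    (h : ∀ u ∈ H.verts, ReflTransGen H.Adj u t) : H.Connected :=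
  fun u hu v hv => (h u hu).trans (Std.Symm.symm _ _ (h v hv))

theorem mem_iff_of_reflTransGen {D : Finset ℕ} (hD : ∀ f ∈ H.edges, f ⊆ D ∨ Disjoint f D)
    {u v : ℕ} (h : ReflTransGen H.Adj u v) : u ∈ D ↔ v ∈ D := by
  induction h with
  | refl => rfl
  | tail _ hadj ih =>
    obtain ⟨f, hf, hb, hc⟩ := hadj
    rw [ih]
    rcases hD f hf with hfD | hfD
    · exact iff_of_true (hfD hb) (hfD hc)
    · exact iff_of_false (disjoint_left.mp hfD hb) (disjoint_left.mp hfD hc)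

theorem not_connected_of_separated {D : Finset ℕ} (hD : ∀ f ∈ H.edges, f ⊆ D ∨ Disjoint f D)
    {u v : ℕ} (hu : u ∈ H.verts) (hv : v ∈ H.verts) (huD : u ∈ D) (hvD : v ∉ D) :
    ¬ H.Connected :=
  fun hH => hvD ((mem_iff_of_reflTransGen hD (hH u hu v hv)).mp huD)

theorem kappa_le_card_of_isVertexCut (h : H.IsVertexCut X) : H.kappa ≤ X.card := by
  classical
  rw [kappa, if_pos ⟨X, h⟩]
  exact Nat.sInf_le ⟨X, h, rfl⟩

theorem card_add_two_le_of_isVertexCut (h : H.IsVertexCut X) : X.card + 2 ≤ H.verts.card := by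
  have hrest : 1 < (H.verts \ X).card := by
    by_contra! hle
    refine h.2 fun u hu v hv => ?_
    rw [induce_verts_of_subset sdiff_subset] at hu hv
    rw [card_le_one.mp hle u hu v hv]
  rw [card_sdiff_of_subset h.1] at hrest
  omega

theorem kappa_le_card_sub_one (H : NatHypergraph) : H.kappa ≤ H.verts.card - 1 := by
  classical
  by_cases h : ∃ X, H.IsVertexCut X
  · obtain ⟨X, hX⟩ := h
    have := card_add_two_le_of_isVertexCut hX
    exact (kappa_le_card_of_isVertexCut hX).trans (by omega)
  · rw [kappa, if_neg h]

theorem lt_kappa_of_forall_connected (hcard : k + 2 ≤ H.verts.card)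
    (h : ∀ X ⊆ H.verts, X.card ≤ k → (H.induce (H.verts \ X)).Connected) : k < H.kappa := by
  classical
  rw [kappa]
  split_ifs with hcut
  · obtain ⟨X₀, hX₀⟩ := hcut
    show k + 1 ≤ _
    refine le_csInf ⟨X₀.card, X₀, hX₀, rfl⟩ ?_
    rintro m ⟨X, hX, rfl⟩
    by_contra! hlt
    exact hX.2 (h X hX.1 (by omega))
  · omega

theorem kappaBar_le (h : ∀ H' : NatHypergraph, H'.IsSub H → H'.kappa ≤ k) : H.kappaBar ≤ k := by
  apply csSup_le
  · exact ⟨H.kappa, H, ⟨subset_rfl, subset_rfl⟩, rfl⟩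
  · rintro m ⟨H', hH', rfl⟩
    exact h H' hH'

theorem kappa_le_kappaBar (hH' : H'.IsSub H) : H'.kappa ≤ H.kappaBar := by
  refine le_csSup ⟨H.verts.card, ?_⟩ ⟨H', hH', rfl⟩
  rintro m ⟨H'', hH'', rfl⟩
  exact (kappa_le_card_sub_one H'').trans ((Nat.sub_le _ _).trans (card_le_card hH''.1))

theorem lt_kappaBar_of_window (hW : W ⊆ H.verts) (hcard : k + 2 ≤ W.card)
    (h : ∀ X ⊆ W, X.card ≤ k → (H.induce (W \ X)).Connected) : k < H.kappaBar := by
  have hverts := induce_verts_of_subset hW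
  refine lt_of_lt_of_le ?_ (kappa_le_kappaBar (induce_isSub H W))
  refine lt_kappa_of_forall_connected (by rw [hverts]; exact hcard) fun X hX hXk => ?_
  rw [hverts] at hX ⊢
  rw [induce_induce sdiff_subset]
  exact h X hX hXk

theorem adj_induce_of_forall_card_eq (hr : 2 ≤ r) (hrY : r ≤ Y.card) {u v : ℕ} (hu : u ∈ Y)
    (hv : v ∈ Y) (h : ∀ f ⊆ Y, f.card = r → u ∈ f → v ∈ f → f ∈ H.edges) :
    (H.induce Y).Adj u v := by
  have huv : ({u, v} : Finset ℕ) ⊆ Y := insert_subset hu (singleton_subset_iff.mpr hv)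
  obtain ⟨f, hsf, hfY, hfr⟩ := exists_subsuperset_card_eq huv
    ((card_le_two).trans hr) hrY
  have hu' : u ∈ f := hsf (mem_insert_self _ _)
  have hv' : v ∈ f := hsf (mem_insert_of_mem (mem_singleton_self _))
  exact ⟨f, mem_induce_edges.mpr ⟨h f hfY hfr hu' hv', hfY⟩, hu', hv'⟩

theorem connected_induce_of_forall_card_eq (hr : 2 ≤ r) (hrY : r ≤ Y.card)
    (h : ∀ f ⊆ Y, f.card = r → f ∈ H.edges) : (H.induce Y).Connected := fun _ hu _ hv =>
  .single <| adj_induce_of_forall_card_eq hr hrY (mem_induce_verts.mp hu).2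
    (mem_induce_verts.mp hv).2 fun f hfY hfr _ _ => h f hfY hfr

theorem connected_induce_of_mem_edges (he : e ∈ H.edges) : (H.induce e).Connected :=
  fun _ hu _ hv => .single
    ⟨e, mem_induce_edges.mpr ⟨he, subset_rfl⟩, (mem_induce_verts.mp hu).2,
      (mem_induce_verts.mp hv).2⟩

theorem connected_induce_union (h₁ : (H.induce Y).Connected) (h₂ : (H.induce Z).Connected)
    {t : ℕ} (ht : t ∈ H.verts) (htY : t ∈ Y) (htZ : t ∈ Z) : (H.induce (Y ∪ Z)).Connected := by
  refine connected_of_forall_reflTransGen (t := t) fun u hu => ?_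
  obtain ⟨huV, huYZ⟩ := mem_induce_verts.mp hu
  rcases mem_union.mp huYZ with huY | huZ
  · exact ReflTransGen.mono (adj_induce_mono subset_union_left) _ _
      (h₁ u (mem_induce_verts.mpr ⟨huV, huY⟩) t (mem_induce_verts.mpr ⟨ht, htY⟩))
  · exact ReflTransGen.mono (adj_induce_mono subset_union_right) _ _
      (h₂ u (mem_induce_verts.mpr ⟨huV, huZ⟩) t (mem_induce_verts.mpr ⟨ht, htZ⟩))

theorem connected_of_adj_across {P Q : Finset ℕ} (hV : H.verts ⊆ P ∪ Q) {x c : ℕ}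
    (hx : x ∈ H.verts) (hxP : x ∈ P) (hc : c ∈ H.verts) (hcQ : c ∈ Q)
    (h : ∀ u ∈ H.verts, ∀ v ∈ H.verts, u ∈ P → v ∈ Q → H.Adj u v) : H.Connected := by
  refine connected_of_forall_reflTransGen (t := x) fun u hu => ?_
  rcases mem_union.mp (hV hu) with huP | huQ
  · exact .tail (.single (h u hu c hc huP hcQ)) (Std.Symm.symm _ _ (h x hx c hc hxP hcQ))
  · exact .single (Std.Symm.symm _ _ (h x hx u hu hxP huQ))

end

/-- The paper's `H_U(n; k, r) = ((p - 1)K_k^r ∪ K_q^r) ∨_r (K_k^r)^c`, with the cliques on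
`A 0, …, A (p - 2)` and `B`, and the edgeless side on `C`. -/
def upperHG (p r : ℕ) (A : ℕ → Finset ℕ) (B C : Finset ℕ) : NatHypergraph :=
  rJoin (hUnion (unionOver (p - 1) fun i => completeHG (A i) r) (completeHG B r)) (emptyHG C) r

def cliquePart (p : ℕ) (A : ℕ → Finset ℕ) (B : Finset ℕ) : Finset ℕ :=
  (range (p - 1)).biUnion A ∪ B

section

variable {p r k : ℕ} {A : ℕ → Finset ℕ} {B C D P Q Y e f : Finset ℕ} {H : NatHypergraph}

theorem mem_cliquePart {x : ℕ} : x ∈ cliquePart p A B ↔ (∃ i < p - 1, x ∈ A i) ∨ x ∈ B := by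
  simp [cliquePart]

theorem A_subset_cliquePart {i : ℕ} (hi : i < p - 1) : A i ⊆ cliquePart p A B :=
  fun _ hx => mem_cliquePart.mpr (.inl ⟨i, hi, hx⟩)

theorem B_subset_cliquePart : B ⊆ cliquePart p A B := subset_union_right

theorem disjoint_cliquePart (hAC : ∀ i < p - 1, Disjoint (A i) C) (hBC : Disjoint B C) :
    Disjoint (cliquePart p A B) C := by
  rw [cliquePart, disjoint_union_left, disjoint_biUnion_left]
  exact ⟨fun i hi => hAC i (mem_range.mp hi), hBC⟩

theorem upperHG_isUniform : (upperHG p r A B C).IsUniform r := by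
  intro f hf
  simp only [upperHG, rJoin, hUnion, unionOver, completeHG, emptyHG, mem_union, mem_filter,
    mem_powersetCard, mem_biUnion, notMem_empty, or_false] at hf
  rcases hf with (⟨_, _, ⟨_, hfr⟩, _⟩ | ⟨⟨_, hfr⟩, _⟩) | hf
  exacts [hfr, hfr, (mem_powersetCard.mp (mem_filter.mp hf).1).2]

theorem mem_upperHG_edges (hr : 0 < r) :
    f ∈ (upperHG p r A B C).edges ↔ f.card = r ∧ ((∃ i < p - 1, f ⊆ A i) ∨ f ⊆ B ∨
      (f ⊆ cliquePart p A B ∪ C ∧ (f ∩ cliquePart p A B).Nonempty ∧ (f ∩ C).Nonempty)) := by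
  simp only [upperHG, cliquePart, rJoin, hUnion, unionOver, completeHG, emptyHG, mem_union,
    mem_filter, mem_powersetCard, mem_biUnion, mem_range, notMem_empty, or_false]
  constructor
  · rintro ((⟨i, hi, ⟨hf, hfr⟩, -⟩ | ⟨⟨hf, hfr⟩, -⟩) | hcross)
    · exact ⟨hfr, .inl ⟨i, hi, hf⟩⟩
    · exact ⟨hfr, .inr (.inl hf)⟩
    · obtain ⟨hfV, hL, hC⟩ := mem_filter.mp hcross
      obtain ⟨hf, hfr⟩ := mem_powersetCard.mp hfV
      exact ⟨hfr, .inr (.inr ⟨hf, hL, hC⟩)⟩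
  · rintro ⟨hfr, ⟨i, hi, hf⟩ | hf | ⟨hf, hL, hC⟩⟩
    all_goals have hne : f.Nonempty := card_pos.mp (hfr ▸ hr)
    exacts [.inl (.inl ⟨i, hi, ⟨hf, hfr⟩, hne⟩), .inl (.inr ⟨⟨hf, hfr⟩, hne⟩),
      .inr (mem_filter.mpr ⟨mem_powersetCard.mpr ⟨hf, hfr⟩, hL, hC⟩)]

theorem not_subset_of_mem_upperHG_edges (hr : 0 < r) (hLC : Disjoint (cliquePart p A B) C)
    (hf : f ∈ (upperHG p r A B C).edges) : ¬ f ⊆ C := by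
  obtain ⟨hfr, hclass⟩ := (mem_upperHG_edges hr).mp hf
  have hfL : (f ∩ cliquePart p A B).Nonempty := by
    rcases hclass with ⟨i, hi, hfA⟩ | hfB | ⟨-, hL, -⟩
    · rw [inter_eq_left.mpr (hfA.trans (A_subset_cliquePart hi))]
      exact card_pos.mp (hfr ▸ hr)
    · rw [inter_eq_left.mpr (hfB.trans B_subset_cliquePart)]
      exact card_pos.mp (hfr ▸ hr)
    · exact hL
  obtain ⟨x, hx⟩ := hfL
  exact fun hfC => disjoint_left.mp hLC (mem_inter.mp hx).2 (hfC (mem_inter.mp hx).1)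

theorem subset_or_disjoint_of_mem_upperHG_edges (hr : 0 < r)
    (hLC : Disjoint (cliquePart p A B) C)
    (hAA : ∀ i < p - 1, ∀ j < p - 1, i ≠ j → Disjoint (A i) (A j))
    (hAB : ∀ i < p - 1, Disjoint (A i) B) {j : ℕ} (hj : j < p - 1)
    (hf : f ∈ (upperHG p r A B C).edges) (hfL : f ⊆ cliquePart p A B) :
    f ⊆ A j ∨ Disjoint f (A j) := by
  rcases ((mem_upperHG_edges hr).mp hf).2 with ⟨i, hi, hfA⟩ | hfB | ⟨-, -, ⟨x, hx⟩⟩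
  · rcases eq_or_ne i j with rfl | hij
    · exact .inl hfA
    · exact .inr ((hAA i hi j hj hij).mono_left hfA)
  · exact .inr ((hAB j hj).symm.mono_left hfB)
  · exact absurd (hfL (mem_inter.mp hx).1) (disjoint_right.mp hLC (mem_inter.mp hx).2)

theorem connected_induce_of_crossing (hr : 2 ≤ r) (hH : (upperHG p r A B C).IsSub H)
    (hY : Y ⊆ cliquePart p A B ∪ C) (hrY : r ≤ Y.card) {x c : ℕ} (hx : x ∈ Y)
    (hxL : x ∈ cliquePart p A B) (hc : c ∈ Y) (hcC : c ∈ C) : (H.induce Y).Connected := by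
  have hverts : (H.induce Y).verts = Y := induce_verts_of_subset (hY.trans hH.1)
  refine connected_of_adj_across (by rw [hverts]; exact hY) (by rw [hverts]; exact hx) hxL
    (by rw [hverts]; exact hc) hcC
    fun u hu v hv huL hvC => ?_
  rw [hverts] at hu hv
  refine adj_induce_of_forall_card_eq hr hrY hu hv fun f hfY hfr huf hvf => hH.2 ?_
  exact (mem_upperHG_edges (by omega)).mpr ⟨hfr, .inr (.inr
    ⟨hfY.trans hY, ⟨u, mem_inter.mpr ⟨huf, huL⟩⟩, ⟨v, mem_inter.mpr ⟨hvf, hvC⟩⟩⟩)⟩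

theorem isVertexCut_inter_cliquePart (hr : 0 < r) (hLC : Disjoint (cliquePart p A B) C)
    (hH : H.IsSub (upperHG p r A B C))
    (hcard : (H.verts ∩ cliquePart p A B).card + 2 ≤ H.verts.card) :
    H.IsVertexCut (H.verts ∩ cliquePart p A B) := by
  have hrestC : H.verts \ (H.verts ∩ cliquePart p A B) ⊆ C := fun v hv => by
    obtain ⟨hvV, hvT⟩ := mem_sdiff.mp hv
    exact (mem_union.mp (hH.1 hvV)).resolve_left fun hvL => hvT (mem_inter.mpr ⟨hvV, hvL⟩)
  have hrest : 1 < (H.verts \ (H.verts ∩ cliquePart p A B)).card := by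
    rw [card_sdiff_of_subset inter_subset_left]
    omega
  obtain ⟨u, hu, v, hv, huv⟩ := one_lt_card.mp hrest
  refine ⟨inter_subset_left, not_connected_of_separated (D := {u}) (fun f hf => ?_)
    (mem_induce_verts.mpr ⟨(mem_sdiff.mp hu).1, hu⟩)
    (mem_induce_verts.mpr ⟨(mem_sdiff.mp hv).1, hv⟩)
    (mem_singleton_self u) (by simpa using huv.symm)⟩
  rw [mem_induce_edges] at hf
  exact absurd (hf.2.trans hrestC) (not_subset_of_mem_upperHG_edges hr hLC (hH.2 hf.1))

theorem isVertexCut_inter_right (hr : 0 < r) (hLC : Disjoint (cliquePart p A B) C)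
    (hAA : ∀ i < p - 1, ∀ j < p - 1, i ≠ j → Disjoint (A i) (A j))
    (hAB : ∀ i < p - 1, Disjoint (A i) B) (hH : H.IsSub (upperHG p r A B C)) {j : ℕ}
    (hj : j < p - 1) {x y : ℕ} (hx : x ∈ H.verts ∩ cliquePart p A B) (hxA : x ∉ A j)
    (hy : y ∈ H.verts) (hyA : y ∈ A j) : H.IsVertexCut (H.verts ∩ C) := by
  have hrestL : H.verts \ (H.verts ∩ C) ⊆ cliquePart p A B := fun v hv => by
    obtain ⟨hvV, hvC⟩ := mem_sdiff.mp hv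
    exact (mem_union.mp (hH.1 hvV)).resolve_right fun h => hvC (mem_inter.mpr ⟨hvV, h⟩)
  have hmem : ∀ v ∈ H.verts, v ∈ cliquePart p A B →
      v ∈ (H.induce (H.verts \ (H.verts ∩ C))).verts := fun v hv hvL =>
    mem_induce_verts.mpr
      ⟨hv, mem_sdiff.mpr ⟨hv, fun h => disjoint_left.mp hLC hvL (mem_inter.mp h).2⟩⟩
  refine ⟨inter_subset_left, not_connected_of_separated (D := A j) (fun f hf => ?_)
    (hmem y hy (A_subset_cliquePart hj hyA)) (hmem x (mem_inter.mp hx).1 (mem_inter.mp hx).2)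
    hyA hxA⟩
  rw [mem_induce_edges] at hf
  exact subset_or_disjoint_of_mem_upperHG_edges hr hLC hAA hAB hj (hH.2 hf.1) (hf.2.trans hrestL)

theorem kappa_le_of_isSub_upperHG (hr : 0 < r) (hLC : Disjoint (cliquePart p A B) C)
    (hAA : ∀ i < p - 1, ∀ j < p - 1, i ≠ j → Disjoint (A i) (A j))
    (hAB : ∀ i < p - 1, Disjoint (A i) B) (hA : ∀ i < p - 1, (A i).card ≤ k)
    (hB : B.card ≤ k) (hC : C.card ≤ k) (hH : H.IsSub (upperHG p r A B C)) : H.kappa ≤ k := by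
  by_cases hsmall : H.verts.card ≤ k + 1
  · exact (kappa_le_card_sub_one H).trans (by omega)
  by_cases hclass : (∃ i < p - 1, H.verts ∩ cliquePart p A B ⊆ A i) ∨
      H.verts ∩ cliquePart p A B ⊆ B
  · have hT : (H.verts ∩ cliquePart p A B).card ≤ k := by
      rcases hclass with ⟨i, hi, hTA⟩ | hTB
      exacts [(card_le_card hTA).trans (hA i hi), (card_le_card hTB).trans hB]
    exact (kappa_le_card_of_isVertexCut
      (isVertexCut_inter_cliquePart hr hLC hH (by omega))).trans hT
  · simp only [not_or, not_exists, not_and] at hclass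
    obtain ⟨y, hyT, hyB⟩ := not_subset.mp hclass.2
    obtain ⟨j, hj, hyA⟩ := (mem_cliquePart.mp (mem_inter.mp hyT).2).resolve_right hyB
    obtain ⟨x, hxT, hxA⟩ := not_subset.mp (hclass.1 j hj)
    exact (kappa_le_card_of_isVertexCut (isVertexCut_inter_right hr hLC hAA hAB hH hj hxT hxA
      (mem_inter.mp hyT).1 hyA)).trans ((card_le_card inter_subset_right).trans hC)

theorem kappaBar_upperHG_le (hr : 0 < r) (hLC : Disjoint (cliquePart p A B) C)
    (hAA : ∀ i < p - 1, ∀ j < p - 1, i ≠ j → Disjoint (A i) (A j))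
    (hAB : ∀ i < p - 1, Disjoint (A i) B) (hA : ∀ i < p - 1, (A i).card ≤ k)
    (hB : B.card ≤ k) (hC : C.card ≤ k) : (upperHG p r A B C).kappaBar ≤ k :=
  kappaBar_le fun _ hH => kappa_le_of_isSub_upperHG hr hLC hAA hAB hA hB hC hH

theorem lt_kappaBar_of_window_upperHG (hr : 2 ≤ r) (hLC : Disjoint (cliquePart p A B) C)
    (hH : (upperHG p r A B C).IsSub H) (hP : P ⊆ cliquePart p A B) (hQ : Q ⊆ C)
    (hcard : r + k ≤ P.card + Q.card)
    (hPconn : ∀ X ⊆ P, X.card + Q.card ≤ k → (H.induce (P \ X)).Connected)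
    (hQconn : ∀ X ⊆ Q, X.card + P.card ≤ k → (H.induce (Q \ X)).Connected) :
    k < H.kappaBar := by
  have hPQ : Disjoint P Q := hLC.mono hP hQ
  have hside : ∀ {P Q : Finset ℕ}, Disjoint P Q →
      (∀ X ⊆ P, X.card + Q.card ≤ k → (H.induce (P \ X)).Connected) →
      ∀ X, Q ⊆ X → X.card ≤ k → (H.induce ((P ∪ Q) \ X)).Connected := by
    intro P Q hPQ hconn X hQX hXk
    have hcardX : (X ∩ P).card + Q.card ≤ k := by
      rw [← card_union_of_disjoint (hPQ.mono_left inter_subset_right)]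
      exact (card_le_card (union_subset inter_subset_left hQX)).trans hXk
    rw [union_sdiff_distrib, sdiff_eq_empty_iff_subset.mpr hQX, union_empty,
      ← sdiff_inter_self_right]
    exact hconn _ inter_subset_right hcardX
  refine lt_kappaBar_of_window ((union_subset_union hP hQ).trans hH.1)
    (by rw [card_union_of_disjoint hPQ]; omega) fun X hX hXk => ?_
  by_cases hQX : Q ⊆ X
  · exact hside hPQ hPconn X hQX hXk
  by_cases hPX : P ⊆ X
  · rw [union_comm]
    exact hside hPQ.symm hQconn X hPX hXk
  obtain ⟨c, hcQ, hcX⟩ := not_subset.mp hQX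
  obtain ⟨x, hxP, hxX⟩ := not_subset.mp hPX
  have hrY : r ≤ ((P ∪ Q) \ X).card := by
    rw [card_sdiff_of_subset hX, card_union_of_disjoint hPQ]
    omega
  exact connected_induce_of_crossing hr hH (sdiff_subset.trans (union_subset_union hP hQ)) hrY
    (mem_sdiff.mpr ⟨mem_union_left _ hxP, hxX⟩) (hP hxP)
    (mem_sdiff.mpr ⟨mem_union_right _ hcQ, hcX⟩) (hQ hcQ)

theorem mem_addEdge_upperHG_edges_self (hr : 0 < r) (heV : e ⊆ cliquePart p A B ∪ C)
    (he : e.card = r) : e ∈ ((upperHG p r A B C).addEdge e).edges :=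
  mem_addEdge_edges_self heV (card_pos.mp (he ▸ hr))

theorem lt_kappaBar_addEdge_of_subset_right (hr : 2 ≤ r) (hLC : Disjoint (cliquePart p A B) C)
    (hDL : D ⊆ cliquePart p A B) (hDk : D.card = k)
    (hD : ∀ f ⊆ D, f.card = r → f ∈ (upperHG p r A B C).edges)
    (heC : e ⊆ C) (he : e.card = r) : k < ((upperHG p r A B C).addEdge e).kappaBar := by
  have hsub := isSub_addEdge (upperHG p r A B C) e
  refine lt_kappaBar_of_window_upperHG hr hLC hsub hDL heC (by omega)
    (fun X hX hXk => ?_) (fun X _ hXk => ?_)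
  · refine connected_induce_of_forall_card_eq hr ?_
      fun f hf hfr => hsub.2 (hD f (hf.trans sdiff_subset) hfr)
    rw [card_sdiff_of_subset hX]
    omega
  · rw [card_eq_zero.mp (by omega : X.card = 0), sdiff_empty]
    exact connected_induce_of_mem_edges
      (mem_addEdge_upperHG_edges_self (by omega) (heC.trans subset_union_right) he)

theorem lt_kappaBar_addEdge_of_subset_cliquePart_of_lt (hr : 2 ≤ r)
    (hLC : Disjoint (cliquePart p A B) C) (hC : k ≤ C.card) (heL : e ⊆ cliquePart p A B)
    (he : e.card = r) (hkr : k < r) :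
    k < ((upperHG p r A B C).addEdge e).kappaBar := by
  refine lt_kappaBar_of_window_upperHG hr hLC (isSub_addEdge _ e) heL subset_rfl (by omega)
    (fun X _ hXk => ?_) (fun X _ hXk => by omega)
  rw [card_eq_zero.mp (by omega : X.card = 0), sdiff_empty]
  exact connected_induce_of_mem_edges
    (mem_addEdge_upperHG_edges_self (by omega) (heL.trans subset_union_left) he)

theorem lt_kappaBar_addEdge_of_subset_cliquePart_of_le (hr : 2 ≤ r)
    (hLC : Disjoint (cliquePart p A B) C) (hDL : D ⊆ cliquePart p A B) (hDk : D.card = k)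
    (hD : ∀ f ⊆ D, f.card = r → f ∈ (upperHG p r A B C).edges) (hC : k ≤ C.card)
    (heL : e ⊆ cliquePart p A B) (he : e.card = r) (hrk : r ≤ k) {z : ℕ} (hzD : z ∈ D)
    (hze : z ∈ e) (heD : ¬ e ⊆ D) : k < ((upperHG p r A B C).addEdge e).kappaBar := by
  have hsub := isSub_addEdge (upperHG p r A B C) e
  have hDe : k < (D ∪ e).card := by
    obtain ⟨w, hwe, hwD⟩ := not_subset.mp heD
    calc k < (insert w D).card := by rw [card_insert_of_notMem hwD, hDk]; omega
      _ ≤ (D ∪ e).card := card_le_card (insert_subset (mem_union_right _ hwe) subset_union_left)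
  refine lt_kappaBar_of_window_upperHG hr hLC hsub (union_subset hDL heL) subset_rfl (by omega)
    (fun X _ hXk => ?_) (fun X _ hXk => by omega)
  rw [card_eq_zero.mp (by omega : X.card = 0), sdiff_empty]
  exact connected_induce_union
    (connected_induce_of_forall_card_eq hr (hDk ▸ hrk) fun f hf hfr => hsub.2 (hD f hf hfr))
    (connected_induce_of_mem_edges
      (mem_addEdge_upperHG_edges_self (by omega) (heL.trans subset_union_left) he))
    (hsub.1 (mem_union_left _ (hDL hzD))) hzD hze

theorem subset_cliquePart_or_subset_right (hr : 0 < r) (heV : e ⊆ cliquePart p A B ∪ C)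
    (he : e.card = r) (hne : e ∉ (upperHG p r A B C).edges) : e ⊆ cliquePart p A B ∨ e ⊆ C := by
  by_contra! h
  obtain ⟨x, hxe, hxL⟩ := not_subset.mp h.1
  obtain ⟨c, hce, hcC⟩ := not_subset.mp h.2
  refine hne ((mem_upperHG_edges hr).mpr ⟨he, .inr (.inr ⟨heV,
    ⟨c, mem_inter.mpr ⟨hce, (mem_union.mp (heV hce)).resolve_right hcC⟩⟩,
    ⟨x, mem_inter.mpr ⟨hxe, (mem_union.mp (heV hxe)).resolve_left hxL⟩⟩⟩)⟩)

theorem lt_kappaBar_addEdge_upperHG (hr : 2 ≤ r) (hLC : Disjoint (cliquePart p A B) C)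
    (hA : ∀ i < p - 1, (A i).card = k) (hC : C.card = k) (hfull : 0 < p - 1 ∨ B.card = k)
    (heV : e ⊆ cliquePart p A B ∪ C) (he : e.card = r) (hne : e ∉ (upperHG p r A B C).edges) :
    k < ((upperHG p r A B C).addEdge e).kappaBar := by
  have hr0 : 0 < r := by omega
  have hAedge : ∀ i < p - 1, ∀ f ⊆ A i, f.card = r → f ∈ (upperHG p r A B C).edges :=
    fun i hi f hf hfr => (mem_upperHG_edges hr0).mpr ⟨hfr, .inl ⟨i, hi, hf⟩⟩
  rcases subset_cliquePart_or_subset_right hr0 heV he hne with heL | heC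
  · rcases lt_or_ge k r with hkr | hrk
    · exact lt_kappaBar_addEdge_of_subset_cliquePart_of_lt hr hLC hC.ge heL he hkr
    obtain ⟨z, hze, hzB⟩ := not_subset.mp fun heB : e ⊆ B =>
      hne ((mem_upperHG_edges hr0).mpr ⟨he, .inr (.inl heB)⟩)
    obtain ⟨j, hj, hzA⟩ := (mem_cliquePart.mp (heL hze)).resolve_right hzB
    exact lt_kappaBar_addEdge_of_subset_cliquePart_of_le hr hLC (A_subset_cliquePart hj) (hA j hj)
      (hAedge j hj) hC.ge heL he hrk hzA hze fun heA => hne (hAedge j hj e heA he)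
  · rcases hfull with hp | hB
    · exact lt_kappaBar_addEdge_of_subset_right hr hLC (A_subset_cliquePart hp) (hA 0 hp)
        (hAedge 0 hp) heC he
    · exact lt_kappaBar_addEdge_of_subset_right hr hLC B_subset_cliquePart hB
        (fun f hf hfr => (mem_upperHG_edges hr0).mpr ⟨hfr, .inr (.inl hf)⟩) heC he

end

end NatHypergraph

theorem stmt_10 (n k r p q : ℕ) (hr : 2 ≤ r) (hn : 2 * k ≤ n)
    (hqk : q ≤ k) (hpq : n = p * k + q)
    (A : ℕ → Finset ℕ) (B C : Finset ℕ)
    (hA : ∀ i < p - 1, (A i).card = k) (hB : B.card = q) (hC : C.card = k)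
    (hAA : ∀ i < p - 1, ∀ j < p - 1, i ≠ j → Disjoint (A i) (A j))
    (hABd : ∀ i < p - 1, Disjoint (A i) B) (hACd : ∀ i < p - 1, Disjoint (A i) C)
    (hBC : Disjoint B C) :
    (NatHypergraph.rJoin
      (NatHypergraph.hUnion
        (NatHypergraph.unionOver (p - 1) (fun i => NatHypergraph.completeHG (A i) r))
        (NatHypergraph.completeHG B r))
      (NatHypergraph.emptyHG C) r).VertexKMaximal r k := by
  have hLC := NatHypergraph.disjoint_cliquePart hACd hBC
  -- `n ≥ 2k` forces `p ≥ 2` or `q = k`, so some class of the clique side has exactly `k` vertices.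
  have hfull : 0 < p - 1 ∨ B.card = k := by
    rcases Nat.lt_or_ge 1 p with hp | hp
    · exact .inl (by omega)
    · interval_cases p <;> omega
  open NatHypergraph in
  exact ⟨upperHG_isUniform,
    kappaBar_upperHG_le (by omega) hLC hAA hABd (fun i hi => (hA i hi).le) (hB ▸ hqk) hC.le,
    fun e heV he hne => lt_kappaBar_addEdge_upperHG hr hLC hA hC hfull heV he hne⟩
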